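/- Let n ≥ 4 be even, κ ≥ log 2, j ≥ 1, 1 ≤ δ, and T ≥ j + δ. Then (n/2)·exp(−κj) + exp(−κ(j+δ−1)) + (n/2 − 1)·exp(−κT) ≥ exp(−κj) + exp(−κ(j+δ)) + (n−2)·exp(−κ(j+1)). -/

import Mathlib

open Real

/-! After factoring `exp (-κ * j)` and `exp (-κ * (j + δ))`, the difference of the two sides is
`(n/2 - 1) exp(-κj) (1 - 2 exp(-κ)) + exp(-κ(j+δ)) (exp κ - 1) + (n/2 - 1) exp(-κT)`,
and every term is nonnegative once `exp κ ≥ 2`. -/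

lemma two_mul_exp_neg_le_one {κ : ℝ} (hκ : log 2 ≤ κ) : 2 * exp (-κ) ≤ 1 := by
  have h2 : 2 ≤ exp κ := by
    simpa [exp_log two_pos] using exp_le_exp.2 hκ
  rw [exp_neg, ← div_eq_mul_inv, div_le_one (exp_pos κ)]
  exact h2

theorem core_inequality_even_general
    (n : ℕ) (κ j δ T : ℝ)
    (hn : 4 ≤ n)
    (hκ : Real.log 2 ≤ κ) :
    Real.exp (-κ * j) + Real.exp (-κ * (j + δ)) +
        ((n : ℝ) - 2) * Real.exp (-κ * (j + 1)) ≤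
      ((n : ℝ) / 2) * Real.exp (-κ * j) + Real.exp (-κ * (j + δ - 1)) +
        ((n : ℝ) / 2 - 1) * Real.exp (-κ * T) := by
  have hm : 0 ≤ (n : ℝ) / 2 - 1 := by
    have : (4 : ℝ) ≤ n := by exact_mod_cast hn
    linarith
  have hq : 0 ≤ 1 - 2 * exp (-κ) := sub_nonneg.2 (two_mul_exp_neg_le_one hκ)
  have hE : 0 ≤ exp κ - 1 := sub_nonneg.2 (one_le_exp ((log_nonneg one_le_two).trans hκ))
  have hj1 : exp (-κ * (j + 1)) = exp (-κ * j) * exp (-κ) := by rw [← exp_add]; ring_nf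
  have hjδ : exp (-κ * (j + δ - 1)) = exp (-κ * (j + δ)) * exp κ := by rw [← exp_add]; ring_nf
  rw [← sub_nonneg]
  calc 0 ≤ ((n : ℝ) / 2 - 1) * exp (-κ * j) * (1 - 2 * exp (-κ))
          + exp (-κ * (j + δ)) * (exp κ - 1) + ((n : ℝ) / 2 - 1) * exp (-κ * T) :=
        add_nonneg (add_nonneg (mul_nonneg (mul_nonneg hm (exp_pos _).le) hq)
          (mul_nonneg (exp_pos _).le hE)) (mul_nonneg hm (exp_pos _).le)
    _ = _ := by rw [hj1, hjδ]; ring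

/-- Core inequality (even case) of `R_SPST ≥ R_FCFS`: for even `n ≥ 4`,
`κ ≥ log 2`, `j ≥ 1`, `δ ≥ 1`, `T ≥ j + δ`. -/
theorem core_inequality_even
    (n : ℕ) (κ j δ T : ℝ)
    (hn : 4 ≤ n) (heven : Even n)
    (hκ : Real.log 2 ≤ κ) (hj : 1 ≤ j) (hδ : 1 ≤ δ) (hT : j + δ ≤ T) :
    Real.exp (-κ * j) + Real.exp (-κ * (j + δ)) +
        ((n : ℝ) - 2) * Real.exp (-κ * (j + 1)) ≤
      ((n : ℝ) / 2) * Real.exp (-κ * j) + Real.exp (-κ * (j + δ - 1)) +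
        ((n : ℝ) / 2 - 1) * Real.exp (-κ * T) :=
  core_inequality_even_general n κ j δ T hn hκ
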